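/- arXiv:2603.20820 — 3 statements merged into one kernel-verified Lean document; each statement's English description precedes it below -/
import Mathlib

section
/- Let a(x) = (1+x)^2(x^6 - x^5 + x^4 - x^3 + x^2 - x + 1) and b(x) = 2x^8 + 2x^7 - 39x^6 - 16x^5 + 110x^4 - 16x^3 - 39x^2 + 2x + 2. Then b(x)^2 - 4a(x)^2 = g(x)·h(x)^2 where g(x) = -(39 + 94x + 39x^2) and h(x) = x(x-1)(2 + x - 10x^2 + x^3 + 2x^4). Moreover, g is squarefree, g and h are coprime in Q[x], and g(1) = -4·43. -/
open Polynomial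

lemma c_inv_cancel (n : ℚ) (hn : n ≠ 0) : (C n⁻¹ : ℚ[X]) * C n = 1 := by
  rw [← C_mul, inv_mul_cancel₀ hn, C_1]

/-- For the conductor-43 example: with
`a(x) = (1+x)²(x⁶-x⁵+x⁴-x³+x²-x+1)` and
`b(x) = 2x⁸+2x⁷-39x⁶-16x⁵+110x⁴-16x³-39x²+2x+2`,
the discriminant `b²-4a²` factors as `g·h²` with
`g = -(39+94x+39x²)` and `h = x(x-1)(2+x-10x²+x³+2x⁴)`;
moreover `g` is squarefree, `g` and `h` are coprime in `ℚ[x]` and `g(1) = -4·43`. -/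
theorem conductor43_discriminant (a b g h : Polynomial ℤ)
    (ha : a = (1 + X)^2 * (X^6 - X^5 + X^4 - X^3 + X^2 - X + 1))
    (hb : b = 2*X^8 + 2*X^7 - 39*X^6 - 16*X^5 + 110*X^4 - 16*X^3 - 39*X^2 + 2*X + 2)
    (hg : g = -(39 + 94*X + 39*X^2))
    (hh : h = X * (X - 1) * (2 + X - 10*X^2 + X^3 + 2*X^4)) :
    b^2 - 4*a^2 = g * h^2 ∧
    Squarefree (g.map (Int.castRingHom ℚ)) ∧
    IsCoprime (g.map (Int.castRingHom ℚ)) (h.map (Int.castRingHom ℚ)) ∧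
    g.eval 1 = -4 * 43 := by
  subst ha hb hg hh
  have hgq : ((-(39 + 94*X + 39*X^2) : ℤ[X]).map (Int.castRingHom ℚ))
      = -(39 + 94*X + 39*X^2) := by
    simp [Polynomial.map_ofNat]
  have hhq : ((X * (X - 1) * (2 + X - 10*X^2 + X^3 + 2*X^4) : ℤ[X]).map (Int.castRingHom ℚ))
      = X * (X - 1) * (2 + X - 10*X^2 + X^3 + 2*X^4) := by
    simp [Polynomial.map_ofNat]
  have hC1376 : ((1376 : ℚ[X])) = C 1376 := (map_ofNat (C : ℚ →+* ℚ[X]) 1376).symm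
  have hCbig : ((48887904 : ℚ[X])) = C 48887904 :=
    (map_ofNat (C : ℚ →+* ℚ[X]) 48887904).symm
  refine ⟨by ring, ?_, ?_, by simp⟩
  · rw [hgq]
    apply Polynomial.Separable.squarefree
    rw [Polynomial.separable_def]
    have hd : derivative (-(39 + 94*X + 39*X^2) : ℚ[X]) = -(94 + 78*X) := by
      simp
      ring_nf
    rw [hd]
    refine ⟨C (1376⁻¹ : ℚ) * 78, -(C (1376⁻¹ : ℚ) * (47 + 39*X)), ?_⟩
    have key : (78 : ℚ[X]) * -(39 + 94*X + 39*X^2) + (-(47 + 39*X)) * -(94 + 78*X)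
        = 1376 := by ring
    calc C (1376⁻¹ : ℚ) * 78 * -(39 + 94*X + 39*X^2)
          + -(C (1376⁻¹ : ℚ) * (47 + 39*X)) * -(94 + 78*X)
        = C (1376⁻¹ : ℚ) * ((78 : ℚ[X]) * -(39 + 94*X + 39*X^2)
            + (-(47 + 39*X)) * -(94 + 78*X)) := by ring
      _ = 1 := by
          rw [key, hC1376, c_inv_cancel]
          norm_num
  · rw [hgq, hhq]
    refine ⟨C ((48887904)⁻¹ : ℚ) * (-1253536 + 6165470*X - 13519049*X^2 + 8296286*X^3
        + 1686439*X^4 - 1659842*X^5),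
      C ((48887904)⁻¹ : ℚ) * (-61310473 - 32366919*X), ?_⟩
    have key : ((-1253536 + 6165470*X - 13519049*X^2 + 8296286*X^3
        + 1686439*X^4 - 1659842*X^5 : ℚ[X])) * -(39 + 94*X + 39*X^2)
        + (-61310473 - 32366919*X) * (X * (X - 1) * (2 + X - 10*X^2 + X^3 + 2*X^4))
        = 48887904 := by ring
    calc C ((48887904)⁻¹ : ℚ) * (-1253536 + 6165470*X - 13519049*X^2 + 8296286*X^3
          + 1686439*X^4 - 1659842*X^5) * -(39 + 94*X + 39*X^2)
          + C ((48887904)⁻¹ : ℚ) * (-61310473 - 32366919*X)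
            * (X * (X - 1) * (2 + X - 10*X^2 + X^3 + 2*X^4))
        = C ((48887904)⁻¹ : ℚ) * (((-1253536 + 6165470*X - 13519049*X^2 + 8296286*X^3
            + 1686439*X^4 - 1659842*X^5 : ℚ[X])) * -(39 + 94*X + 39*X^2)
          + (-61310473 - 32366919*X) * (X * (X - 1) * (2 + X - 10*X^2 + X^3 + 2*X^4))) := by
          ring
      _ = 1 := by
          rw [key, hCbig, c_inv_cancel]
          norm_num
end

section
/- Let a(x) = x^6 + x^5 + x^4 + x^3 + x^2 + x + 1 and b(x) = 2x^6 + 2x^5 - 5x^4 - 12x^3 - 5x^2 + 2x + 2. Then b(x)^2 - 4a(x)^2 = -7·h(x)^2 where h(x) = (x-1)·x·(x+1)·(2x^2 + 3x + 2). The roots of h lying on the complex unit circle are exactly 1, -1, (-3 + √(-7))/4, and (-3 - √(-7))/4, and all of these roots lie in the field Q(√(-7)). -/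
open Polynomial

/-- Ray's conductor-7 example: with `a(x) = x⁶+x⁵+x⁴+x³+x²+x+1` and
`b(x) = 2x⁶+2x⁵-5x⁴-12x³-5x²+2x+2` one has `b²-4a² = -7·h²` where
`h = (x-1)·x·(x+1)·(2x²+3x+2)`. The roots of `h` on the complex unit circle are
exactly `1, -1, (-3±√-7)/4`, and they all lie in `ℚ(√-7)`. -/
theorem conductor7_ray (a b h : Polynomial ℤ)
    (ha : a = X^6 + X^5 + X^4 + X^3 + X^2 + X + 1)
    (hb : b = 2*X^6 + 2*X^5 - 5*X^4 - 12*X^3 - 5*X^2 + 2*X + 2)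
    (hh : h = (X - 1) * X * (X + 1) * (2*X^2 + 3*X + 2)) :
    b^2 - 4*a^2 = -7 * h^2 ∧
    {α : ℂ | Polynomial.aeval α h = 0 ∧ ‖α‖ = 1} =
      {1, -1, (-3 + Complex.I * Real.sqrt 7) / 4, (-3 - Complex.I * Real.sqrt 7) / 4} ∧
    (∀ α : ℂ, Polynomial.aeval α h = 0 → ‖α‖ = 1 →
      α ∈ IntermediateField.adjoin ℚ {(Complex.I * Real.sqrt 7 : ℂ)}) := by
  set s : ℂ := Complex.I * Real.sqrt 7 with hsdef
  have hs2 : s ^ 2 = -7 := by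
    have h7 : (Real.sqrt 7 : ℝ) ^ 2 = 7 := Real.sq_sqrt (by norm_num)
    have : ((Real.sqrt 7 : ℝ) : ℂ) ^ 2 = (7 : ℂ) := by
      rw [← Complex.ofReal_pow, h7]; norm_num
    rw [hsdef, mul_pow, Complex.I_sq, this]; ring
  have heval : ∀ α : ℂ, Polynomial.aeval α h =
      (α - 1) * α * (α + 1) * (2 * α ^ 2 + 3 * α + 2) := by
    intro α
    simp only [hh, map_mul, map_add, map_sub, map_pow, map_ofNat, aeval_X, map_one]
  have hquad : ∀ α : ℂ, 2 * α ^ 2 + 3 * α + 2 =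
      2 * (α - (-3 + s) / 4) * (α - (-3 - s) / 4) := by
    intro α
    have : (α - (-3 + s) / 4) * (α - (-3 - s) / 4)
        = α ^ 2 + (3 / 2) * α + (9 - s ^ 2) / 16 := by ring
    rw [mul_assoc, this, hs2]; ring
  have habs : ‖(-3 + s) / 4‖ = 1 ∧ ‖(-3 - s) / 4‖ = 1 := by
    have h7 : Real.sqrt 7 ^ 2 = 7 := Real.sq_sqrt (by norm_num)
    constructor <;>
    · rw [show (1 : ℝ) = Real.sqrt 1 by simp [Real.sqrt_one], Complex.norm_def,
        Complex.normSq_apply]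
      congr 1
      simp [hsdef, Complex.div_re, Complex.div_im, Complex.normSq_apply]
      nlinarith [h7]
  have hset : {α : ℂ | Polynomial.aeval α h = 0 ∧ ‖α‖ = 1} =
      {1, -1, (-3 + s) / 4, (-3 - s) / 4} := by
    ext α
    simp only [Set.mem_setOf_eq, Set.mem_insert_iff, Set.mem_singleton_iff]
    constructor
    · rintro ⟨h0, h1⟩
      rw [heval, hquad] at h0
      rcases mul_eq_zero.1 h0 with h0 | h0
      · rcases mul_eq_zero.1 h0 with h0 | h0
        · rcases mul_eq_zero.1 h0 with h0 | h0
          · left; linear_combination h0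
          · exfalso; rw [h0] at h1; simp at h1
        · right; left; linear_combination h0
      · rcases mul_eq_zero.1 h0 with h0 | h0
        · rcases mul_eq_zero.1 h0 with h0 | h0
          · norm_num at h0
          · right; right; left; linear_combination h0
        · right; right; right; linear_combination h0
    · rintro (rfl | rfl | rfl | rfl)
      · constructor
        · rw [heval]; ring
        · simp
      · constructor
        · rw [heval]; ring
        · simp
      · refine ⟨?_, habs.1⟩
        rw [heval, hquad]; ring
      · refine ⟨?_, habs.2⟩
        rw [heval, hquad]; ring
  refine ⟨?_, hset, ?_⟩
  · subst ha hb hh; ring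
  · intro α h0 h1
    have : α ∈ ({1, -1, (-3 + s) / 4, (-3 - s) / 4} : Set ℂ) := by
      rw [← hset]; exact ⟨h0, h1⟩
    set K := IntermediateField.adjoin ℚ {s}
    have hsK : s ∈ K := IntermediateField.subset_adjoin ℚ {s} rfl
    have h3 : (-3 : ℂ) ∈ K := by
      have := IntermediateField.algebraMap_mem K (-3 : ℚ)
      simpa using this
    have h4 : (4 : ℂ) ∈ K := by
      have := IntermediateField.algebraMap_mem K (4 : ℚ)
      simpa using this
    rcases this with rfl | rfl | rfl | rfl
    · exact one_mem K
    · exact neg_mem (one_mem K)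
    · exact div_mem (add_mem h3 hsK) h4
    · exact div_mem (sub_mem h3 hsK) h4
end

section
/- Let χ = χ_{-f} be the odd quadratic Dirichlet character of conductor f, let D be the Bloch–Wigner dilogarithm, and define α_f = Π_{0<u<f/2} |2sin(πu/f)|^{-2χ(u)u}. Assume the Cassaigne–Maillot formula for m(x + y + c) (c > 0) and the identity 2L'(χ_{-f}, -1) = (f/2π)·Σ_{0<u<f} χ(u)·D(e^{2πiu/f}). Then m(α_f · Π_{0<u<f/2} (x + y + 2sin(πu/f))^{χ(u)f}) = 2L'(χ_{-f}, -1). -/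
open Finset Real

/-- The dilogarithm `Li₂(z) = -∫₀¹ log(1 - zt)/t dt` (principal branch of the logarithm). -/
noncomputable def Li2 (z : ℂ) : ℂ := -∫ t in (0:ℝ)..1, Complex.log (1 - z * t) / t

/-- The Bloch–Wigner dilogarithm `D(z) = Im(Li₂(z)) + arg(1-z)·log|z|`. -/
noncomputable def BW (z : ℂ) : ℝ := (Li2 z).im + (1 - z).arg * Real.log ‖z‖

/-- The field `ℂ(x,y)` of bivariate rational functions. -/
abbrev RatFunc2 : Type := FractionRing (MvPolynomial (Fin 2) ℂ)

/-- The embedding `ℂ[x,y] → ℂ(x,y)`. -/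
noncomputable def toRatFunc2 : MvPolynomial (Fin 2) ℂ →+* RatFunc2 :=
  algebraMap (MvPolynomial (Fin 2) ℂ) RatFunc2

-- conj commutes with interval integral
lemma my_intervalIntegral_conj {g : ℝ → ℂ} {a b : ℝ} :
    (∫ t in a..b, (starRingEnd ℂ) (g t)) = (starRingEnd ℂ) (∫ t in a..b, g t) := by
  simp only [intervalIntegral, integral_conj, map_sub]

lemma my_arg_ne_pi {w : ℂ} (h : 0 ≤ w.re) : w.arg ≠ π := by
  intro h'
  rw [Complex.arg_eq_pi_iff] at h'
  linarith [h'.1]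

lemma BW_conj {z : ℂ} (hz : ‖z‖ = 1) :
    BW ((starRingEnd ℂ) z) = -BW z := by
  have hLi : Li2 ((starRingEnd ℂ) z) = (starRingEnd ℂ) (Li2 z) := by
    unfold Li2
    rw [map_neg, ← my_intervalIntegral_conj, neg_inj]
    apply intervalIntegral.integral_congr
    intro t ht
    rw [Set.uIcc_of_le (by norm_num : (0:ℝ) ≤ 1)] at ht
    have hre : 0 ≤ (1 - z * (t:ℂ)).re := by
      have h1 : (1 - z * (t:ℂ)).re = 1 - z.re * t := by simp
      have h2 : z.re ≤ 1 := by
        calc z.re ≤ |z.re| := le_abs_self _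
        _ ≤ ‖z‖ := Complex.abs_re_le_norm z
        _ = 1 := hz
      have h3 : -1 ≤ z.re := by
        have := Complex.abs_re_le_norm z
        rw [hz] at this
        cases abs_le.mp this with
        | intro a b => exact a
      rw [h1]
      nlinarith [ht.1, ht.2]
    show Complex.log (1 - (starRingEnd ℂ) z * (t:ℂ)) / (t:ℂ) = (starRingEnd ℂ) (Complex.log (1 - z * (t:ℂ)) / (t:ℂ))
    have h0 : (1 : ℂ) - (starRingEnd ℂ) z * (t:ℂ) = (starRingEnd ℂ) (1 - z * (t:ℂ)) := by
      simp [map_sub, map_mul, Complex.conj_ofReal]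
    rw [h0, Complex.log_conj _ (my_arg_ne_pi hre)]
    rw [show ((t:ℂ)) = (starRingEnd ℂ) ((t:ℂ)) by simp [Complex.conj_ofReal], ← map_div₀]
    simp [Complex.conj_ofReal]
  have hre1 : 0 ≤ (1 - z).re := by
    have h2 : z.re ≤ 1 := by
      calc z.re ≤ |z.re| := le_abs_self _
      _ ≤ ‖z‖ := Complex.abs_re_le_norm z
      _ = 1 := hz
    simp [h2]
  have harg : (1 - (starRingEnd ℂ) z).arg = -(1 - z).arg := by
    have : (1 : ℂ) - (starRingEnd ℂ) z = (starRingEnd ℂ) (1 - z) := by simp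
    rw [this, Complex.arg_conj, if_neg (my_arg_ne_pi hre1)]
  unfold BW
  rw [hLi, harg]
  simp [Complex.conj_im]
  ring

lemma BW_neg_one : BW (-1) = 0 := by
  have h := BW_conj (z := -1) (by simp)
  simp only [map_neg, map_one] at h
  linarith


section Mlemmas

variable (M : RatFunc2 → ℝ)
  (hMmul : ∀ P Q : RatFunc2, P ≠ 0 → Q ≠ 0 → M (P * Q) = M P + M Q)
  (hM1 : M 1 = 0)

include hMmul hM1 in
lemma M_pow (P : RatFunc2) (hP : P ≠ 0) (n : ℕ) : M (P ^ n) = n * M P := by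
  induction n with
  | zero => simpa using hM1
  | succ n ih =>
    rw [pow_succ, hMmul _ _ (pow_ne_zero _ hP) hP, ih]
    push_cast
    ring

include hMmul hM1 in
lemma M_zpow (P : RatFunc2) (hP : P ≠ 0) (n : ℤ) : M (P ^ n) = n * M P := by
  have hinv : M P⁻¹ = -M P := by
    have h := hMmul P P⁻¹ hP (inv_ne_zero hP)
    rw [mul_inv_cancel₀ hP, hM1] at h
    linarith
  cases n with
  | ofNat n => simpa using M_pow M hMmul hM1 P hP n
  | negSucc n =>
    rw [zpow_negSucc]
    have h := hMmul (P ^ (n+1)) (P ^ (n+1))⁻¹ (pow_ne_zero _ hP)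
      (inv_ne_zero (pow_ne_zero _ hP))
    rw [mul_inv_cancel₀ (pow_ne_zero _ hP), hM1, M_pow M hMmul hM1 P hP (n+1)] at h
    push_cast at h ⊢
    linarith

include hMmul hM1 in
lemma M_prod {ι : Type*} (s : Finset ι) (g : ι → RatFunc2) (hg : ∀ i ∈ s, g i ≠ 0) :
    M (∏ i ∈ s, g i) = ∑ i ∈ s, M (g i) := by
  induction s using Finset.cons_induction with
  | empty => simpa using hM1
  | cons a s ha ih =>
    rw [Finset.prod_cons, Finset.sum_cons,
      hMmul _ _ (hg a (Finset.mem_cons_self a s))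
        (Finset.prod_ne_zero_iff.mpr fun i hi => hg i (Finset.mem_cons_of_mem hi)),
      ih fun i hi => hg i (Finset.mem_cons_of_mem hi)]

end Mlemmas

/-- Chinburg's weak conjecture with cyclotomic coefficients (Theorem 4.1): for the odd
quadratic Dirichlet character `χ = χ_{-f}` of conductor `f`, with
`α_f = Π_{0<u<f/2} |2sin(πu/f)|^{-2χ(u)u}`, and assuming
(i) the Mahler measure `M` is additive and takes the value `log|c|` on constants,
(ii) the Cassaigne–Maillot formula
`M(x+y+2sin(πu/f)) = (2u/f)log|2sin(πu/f)| + (1/π)D(e^{2πiu/f})`, and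
(iii) the identity `2L'(χ_{-f},-1) = (f/2π)·Σ_{0<u<f} χ(u)D(e^{2πiu/f})`,
one has `M(α_f · Π_{0<u<f/2} (x+y+2sin(πu/f))^{χ(u)f}) = 2L'(χ_{-f},-1)`. -/
theorem chinburg_weak_cyclotomic (f : ℕ) [NeZero f]
    (χ : DirichletCharacter ℂ f) (hquad : χ ^ 2 = 1) (hodd : χ (-1) = -1)
    (hcond : χ.conductor = f)
    (e : ℕ → ℤ) (he : ∀ u : ℕ, (e u : ℂ) = χ (u : ZMod f))
    (M : RatFunc2 → ℝ)
    (hMmul : ∀ P Q : RatFunc2, P ≠ 0 → Q ≠ 0 → M (P * Q) = M P + M Q)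
    (hMconst : ∀ c : ℂ, c ≠ 0 →
      M (toRatFunc2 (MvPolynomial.C c)) = Real.log ‖c‖)
    (hCM : ∀ u : ℕ, 0 < u → 2 * u < f →
      M (toRatFunc2 (MvPolynomial.X 0 + MvPolynomial.X 1 +
          MvPolynomial.C ((2 * Real.sin (π * u / f) : ℝ) : ℂ))) =
        (2 * u / f) * Real.log |2 * Real.sin (π * u / f)| +
          (1 / π) * BW (Complex.exp (2 * π * Complex.I * u / f)))
    (hL : 2 * deriv (DirichletCharacter.LFunction χ) (-1) =
      (f / (2 * π)) * ∑ u ∈ Finset.Ioo 0 f, χ (u : ZMod f) *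
        (BW (Complex.exp (2 * π * Complex.I * u / f)) : ℂ)) :
    ((M (toRatFunc2 (MvPolynomial.C
        ((∏ u ∈ (Finset.Ioo 0 f).filter (fun u => 2 * u < f),
            |2 * Real.sin (π * u / f)| ^ (-(2 * e u * u) : ℤ) : ℝ) : ℂ)) *
      ∏ u ∈ (Finset.Ioo 0 f).filter (fun u => 2 * u < f),
        (toRatFunc2 (MvPolynomial.X 0 + MvPolynomial.X 1 +
          MvPolynomial.C ((2 * Real.sin (π * u / f) : ℝ) : ℂ))) ^ (e u * f : ℤ)) : ℝ) : ℂ) =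
    2 * deriv (DirichletCharacter.LFunction χ) (-1) := by
  have hfR : (f : ℝ) ≠ 0 := Nat.cast_ne_zero.mpr (NeZero.ne f)
  have hfC : (f : ℂ) ≠ 0 := Nat.cast_ne_zero.mpr (NeZero.ne f)
  have hπ : (π : ℝ) ≠ 0 := Real.pi_ne_zero
  set S := (Finset.Ioo 0 f).filter (fun u => 2 * u < f) with hSdef
  -- basic positivity
  have hsin : ∀ u ∈ S, 0 < 2 * Real.sin (π * u / f) := by
    intro u hu
    rw [hSdef, Finset.mem_filter, Finset.mem_Ioo] at hu
    have h1 : 0 < π * u / f := by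
      have : (0:ℝ) < u := by exact_mod_cast hu.1.1
      positivity
    have h2 : π * u / f < π := by
      have hult : (u:ℝ) < f := by exact_mod_cast hu.1.2
      have hf0 : (0:ℝ) < f := lt_of_le_of_lt (by positivity) hult
      rw [div_lt_iff₀ hf0]
      have := Real.pi_pos
      nlinarith
    have := Real.sin_pos_of_pos_of_lt_pi h1 h2
    linarith
  -- M 1 = 0
  have hM1 : M 1 = 0 := by
    have h := hMconst 1 one_ne_zero
    simpa using h
  -- injectivity
  have hinj : Function.Injective toRatFunc2 :=
    IsFractionRing.injective (MvPolynomial (Fin 2) ℂ) RatFunc2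
  -- the linear polynomials are nonzero
  have hPne : ∀ c : ℂ, toRatFunc2 (MvPolynomial.X 0 + MvPolynomial.X 1 +
      MvPolynomial.C c) ≠ 0 := by
    intro c h
    have h0 : (MvPolynomial.X 0 + MvPolynomial.X 1 + MvPolynomial.C c :
        MvPolynomial (Fin 2) ℂ) = 0 := by
      apply hinj
      rw [map_zero]
      exact h
    have h1 := congrArg (MvPolynomial.eval (fun i : Fin 2 => if i = 0 then 1 else -c)) h0
    simp at h1
  -- value of M on a constant real > 0
  set α : ℝ := ∏ u ∈ S, |2 * Real.sin (π * u / f)| ^ (-(2 * e u * u) : ℤ) with hαdef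
  have hαpos : 0 < α := by
    apply Finset.prod_pos
    intro u hu
    exact zpow_pos (abs_pos.mpr (hsin u hu).ne') _
  have hMα : M (toRatFunc2 (MvPolynomial.C (α : ℂ))) =
      ∑ u ∈ S, (-(2 * e u * u) : ℤ) * Real.log |2 * Real.sin (π * u / f)| := by
    rw [hMconst _ (by exact_mod_cast hαpos.ne')]
    rw [Complex.norm_real, Real.norm_eq_abs, abs_of_pos hαpos, hαdef]
    rw [Real.log_prod (fun u hu => (zpow_pos (abs_pos.mpr (hsin u hu).ne') _).ne')]
    exact Finset.sum_congr rfl fun u hu => Real.log_zpow _ _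
  -- M of the big product
  have hfac : ∀ u ∈ S, (toRatFunc2 (MvPolynomial.X 0 + MvPolynomial.X 1 +
      MvPolynomial.C ((2 * Real.sin (π * u / f) : ℝ) : ℂ))) ^ (e u * f : ℤ) ≠ 0 :=
    fun u _ => zpow_ne_zero _ (hPne _)
  have hαne : toRatFunc2 (MvPolynomial.C (α : ℂ)) ≠ 0 := by
    intro h
    have h0 : (MvPolynomial.C (α:ℂ) : MvPolynomial (Fin 2) ℂ) = 0 := by
      apply hinj
      rw [map_zero]
      exact h
    rw [MvPolynomial.C_eq_zero] at h0
    exact (by exact_mod_cast hαpos.ne' : (α:ℂ) ≠ 0) h0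
  have hprodne : (∏ u ∈ S, (toRatFunc2 (MvPolynomial.X 0 + MvPolynomial.X 1 +
      MvPolynomial.C ((2 * Real.sin (π * u / f) : ℝ) : ℂ))) ^ (e u * f : ℤ)) ≠ 0 :=
    Finset.prod_ne_zero_iff.mpr hfac
  have key : M (toRatFunc2 (MvPolynomial.C (α : ℂ)) *
      ∏ u ∈ S, (toRatFunc2 (MvPolynomial.X 0 + MvPolynomial.X 1 +
        MvPolynomial.C ((2 * Real.sin (π * u / f) : ℝ) : ℂ))) ^ (e u * f : ℤ)) =
      (f / π) * ∑ u ∈ S, (e u : ℝ) * BW (Complex.exp (2 * π * Complex.I * u / f)) := by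
    rw [hMmul _ _ hαne hprodne, hMα,
      M_prod M hMmul hM1 S _ hfac, Finset.mul_sum, ← Finset.sum_add_distrib]
    apply Finset.sum_congr rfl
    intro u hu
    have huS := hu
    rw [hSdef, Finset.mem_filter, Finset.mem_Ioo] at huS
    rw [M_zpow M hMmul hM1 _ (hPne _) _, hCM u huS.1.1 huS.2]
    have hu0 : (0:ℝ) < u := by exact_mod_cast huS.1.1
    push_cast
    field_simp
    ring
  -- |exp(2πiu/f)| = 1
  have habs : ∀ u : ℕ, ‖Complex.exp (2 * π * Complex.I * u / f)‖ = 1 := by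
    intro u
    have h1 : (2 * (π:ℂ) * Complex.I * u / f) = ((2 * π * u / f : ℝ) : ℂ) * Complex.I := by
      push_cast; ring
    rw [h1, Complex.norm_exp_ofReal_mul_I]
  -- reflection identity
  have hpair : ∀ u ∈ Finset.Ioo 0 f,
      χ (((f - u : ℕ) : ZMod f)) *
        (BW (Complex.exp (2 * π * Complex.I * ((f - u : ℕ) : ℂ) / f)) : ℂ)
      = χ (u : ZMod f) * (BW (Complex.exp (2 * π * Complex.I * u / f)) : ℂ) := by
    intro u hu
    rw [Finset.mem_Ioo] at hu
    have hχ : χ (((f - u : ℕ) : ZMod f)) = - χ (u : ZMod f) := by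
      have h1 : ((f - u : ℕ) : ZMod f) = -(u : ZMod f) := by
        rw [Nat.cast_sub hu.2.le, ZMod.natCast_self, zero_sub]
      rw [h1, neg_eq_neg_one_mul, map_mul, hodd, neg_one_mul]
    have hz : Complex.exp (2 * π * Complex.I * ((f - u : ℕ) : ℂ) / f)
        = (starRingEnd ℂ) (Complex.exp (2 * π * Complex.I * u / f)) := by
      have hcast : ((f - u : ℕ) : ℂ) = (f : ℂ) - u := by
        push_cast [Nat.cast_sub hu.2.le]; ring
      have h1 : 2 * (π:ℂ) * Complex.I * ((f - u : ℕ) : ℂ) / f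
          = 2 * π * Complex.I + -(2 * π * Complex.I * u / f) := by
        rw [hcast]; field_simp; ring
      rw [h1, Complex.exp_add, Complex.exp_two_pi_mul_I, one_mul]
      have h2 : (starRingEnd ℂ) (2 * (π:ℂ) * Complex.I * u / f)
          = -(2 * (π:ℂ) * Complex.I * u / f) := by
        simp only [map_div₀, map_mul, Complex.conj_I, Complex.conj_ofReal,
          Complex.conj_natCast, map_ofNat]
        ring
      rw [← Complex.exp_conj, h2]
    rw [hχ, hz, BW_conj (habs u)]
    push_cast
    ring
  -- middle term vanishes
  have hmid : ∀ u : ℕ, 2 * u = f →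
      BW (Complex.exp (2 * π * Complex.I * u / f)) = 0 := by
    intro u h2u
    have hc : ((2 * u : ℕ) : ℂ) = (f : ℂ) := by exact_mod_cast congrArg (Nat.cast : ℕ → ℂ) h2u
    push_cast at hc
    have h1 : (2 * (π:ℂ) * Complex.I * u / f) = π * Complex.I := by
      rw [div_eq_iff hfC]
      linear_combination ((π:ℂ) * Complex.I) * hc
    rw [h1, Complex.exp_pi_mul_I, BW_neg_one]
  -- fold the sum over (0,f) to twice the sum over (0,f/2)
  have hsum : ∑ u ∈ Finset.Ioo 0 f, χ (u : ZMod f) *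
        (BW (Complex.exp (2 * π * Complex.I * u / f)) : ℂ)
      = 2 * ∑ u ∈ S, χ (u : ZMod f) *
        (BW (Complex.exp (2 * π * Complex.I * u / f)) : ℂ) := by
    rw [← Finset.sum_filter_add_sum_filter_not (Finset.Ioo 0 f) (fun u => 2 * u < f)
      (fun u => χ (u : ZMod f) * (BW (Complex.exp (2 * π * Complex.I * u / f)) : ℂ)),
      ← hSdef]
    rw [← Finset.sum_filter_add_sum_filter_not
      ((Finset.Ioo 0 f).filter (fun u => ¬ 2 * u < f)) (fun u => f < 2 * u)
      (fun u => χ (u : ZMod f) * (BW (Complex.exp (2 * π * Complex.I * u / f)) : ℂ))]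
    have hmz : ∑ u ∈ (((Finset.Ioo 0 f).filter (fun u => ¬ 2 * u < f)).filter
        (fun u => ¬ f < 2 * u)),
        χ (u : ZMod f) * (BW (Complex.exp (2 * π * Complex.I * u / f)) : ℂ) = 0 := by
      apply Finset.sum_eq_zero
      intro u hu
      simp only [Finset.mem_filter, Finset.mem_Ioo, not_lt] at hu
      have h2u : 2 * u = f := le_antisymm hu.2 hu.1.2
      rw [hmid u h2u]
      simp
    have hflip : ∑ u ∈ (((Finset.Ioo 0 f).filter (fun u => ¬ 2 * u < f)).filter
        (fun u => f < 2 * u)),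
        χ (u : ZMod f) * (BW (Complex.exp (2 * π * Complex.I * u / f)) : ℂ)
        = ∑ u ∈ S, χ (u : ZMod f) *
          (BW (Complex.exp (2 * π * Complex.I * u / f)) : ℂ) := by
      apply Finset.sum_nbij' (i := fun u => f - u) (j := fun u => f - u)
      · intro a ha
        simp only [Finset.mem_filter, Finset.mem_Ioo, not_lt] at ha
        rw [hSdef, Finset.mem_filter, Finset.mem_Ioo]
        omega
      · intro a ha
        rw [hSdef, Finset.mem_filter, Finset.mem_Ioo] at ha
        simp only [Finset.mem_filter, Finset.mem_Ioo, not_lt]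
        omega
      · intro a ha
        simp only [Finset.mem_filter, Finset.mem_Ioo, not_lt] at ha
        omega
      · intro a ha
        rw [hSdef, Finset.mem_filter, Finset.mem_Ioo] at ha
        omega
      · intro a ha
        simp only [Finset.mem_filter, Finset.mem_Ioo, not_lt] at ha
        have haIoo : a ∈ Finset.Ioo 0 f := Finset.mem_Ioo.mpr ⟨ha.1.1.1, ha.1.1.2⟩
        exact (hpair a haIoo).symm
    rw [hmz, hflip, add_zero]
    ring
  -- put everything together
  rw [key, hL, hsum]
  have hcast : ∑ u ∈ S, χ (u : ZMod f) *
      (BW (Complex.exp (2 * π * Complex.I * u / f)) : ℂ)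
      = ((∑ u ∈ S, (e u : ℝ) * BW (Complex.exp (2 * π * Complex.I * u / f)) : ℝ) : ℂ) := by
    push_cast
    exact Finset.sum_congr rfl fun u _ => by rw [← he u]
  rw [hcast]
  have hπC : (π:ℂ) ≠ 0 := by exact_mod_cast hπ
  push_cast
  field_simp
end
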